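/- Let A be a hyperbolic surface with piecewise geodesic boundary, let γ be a geodesic arc contained in ∂A, and let E ⊂ γ be a measurable subset such that for each x ∈ E the perpendicular geodesic arc a_x of length ε emanating from x into A is defined, and the arcs {a_x : x ∈ E} are pairwise disjoint, embedded, and contained in the interior of A except for their starting points. Then length(E) · sinh(ε) ≤ Area(A). -/

import Mathlib

open MeasureTheory ENNReal Set

/-- The hyperbolic area of a region of the upper half-plane: `∫∫ dx dy / y²`. -/
noncomputable def hypArea (T : Set (ℝ × ℝ)) : ℝ≥0∞ :=
  ∫⁻ p in T, ENNReal.ofReal (1 / p.2 ^ 2)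

/-- The perpendicular geodesic arc of hyperbolic length `ε` emanating from the point
`(0, e^s)` of the imaginary axis into the side `x ≥ 0`: it lies on the semicircle of
radius `e^s` centred at the origin, up to the angle `arctan(sinh ε)` (the point at
angle `φ` is at hyperbolic distance `arsinh(tan φ)` from the axis). -/
def perpArc (s ε : ℝ) : Set (ℝ × ℝ) :=
  {q | ∃ φ ∈ Icc (0 : ℝ) (Real.arctan (Real.sinh ε)),
    q = (Real.exp s * Real.sin φ, Real.exp s * Real.cos φ)}

/-!
The arcs over `E` are the image of the rectangle `E × [0, arctan (sinh ε)]` under the log-polar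
chart `(s, φ) ↦ (e^s sin φ, e^s cos φ)`, which is injective there. Its Jacobian `e^{2s}` against
the hyperbolic density `1 / y²` leaves the density `1 / cos² φ` on the rectangle, whose integral
is `length(E) · tan (arctan (sinh ε)) = length(E) · sinh ε`.
-/

open Real

noncomputable def logPolar (p : ℝ × ℝ) : ℝ × ℝ :=
  (exp p.1 * sin p.2, exp p.1 * cos p.2)

noncomputable def logPolarDeriv (p : ℝ × ℝ) : ℝ × ℝ →L[ℝ] ℝ × ℝ :=
  LinearMap.toContinuousLinearMap <|
    Matrix.toLin (Module.Basis.finTwoProd ℝ) (Module.Basis.finTwoProd ℝ)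
      !![exp p.1 * sin p.2, exp p.1 * cos p.2;
         exp p.1 * cos p.2, -(exp p.1 * sin p.2)]

theorem hasFDerivAt_logPolar (p : ℝ × ℝ) : HasFDerivAt logPolar (logPolarDeriv p) p := by
  have hexp : HasFDerivAt (fun q : ℝ × ℝ => exp q.1) (exp p.1 • ContinuousLinearMap.fst ℝ ℝ ℝ) p :=
    (hasDerivAt_exp p.1).comp_hasFDerivAt p hasFDerivAt_fst
  have hsin : HasFDerivAt (fun q : ℝ × ℝ => sin q.2) (cos p.2 • ContinuousLinearMap.snd ℝ ℝ ℝ) p :=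
    (hasDerivAt_sin p.2).comp_hasFDerivAt p hasFDerivAt_snd
  have hcos : HasFDerivAt (fun q : ℝ × ℝ => cos q.2)
      ((-sin p.2) • ContinuousLinearMap.snd ℝ ℝ ℝ) p :=
    (hasDerivAt_cos p.2).comp_hasFDerivAt p hasFDerivAt_snd
  convert (hexp.mul hsin).prodMk (hexp.mul hcos) using 1 <;> try rfl
  refine ContinuousLinearMap.ext fun ⟨u, v⟩ => ?_
  simp [logPolarDeriv, Matrix.toLin_apply, Module.Basis.finTwoProd, Matrix.mulVec, Prod.ext_iff]
  constructor <;> ring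

theorem det_logPolarDeriv (p : ℝ × ℝ) : (logPolarDeriv p).det = -exp (2 * p.1) := by
  rw [logPolarDeriv, ContinuousLinearMap.det, LinearMap.coe_toContinuousLinearMap,
    LinearMap.det_toLin, Matrix.det_fin_two_of, two_mul, exp_add]
  linear_combination -(exp p.1 * exp p.1) * sin_sq_add_cos_sq p.2

theorem injOn_logPolar : InjOn logPolar (univ ×ˢ Icc (-(π / 2)) (π / 2)) := by
  rintro ⟨s, φ⟩ ⟨-, hφ⟩ ⟨t, ψ⟩ ⟨-, hψ⟩ heq
  obtain ⟨h₁, h₂⟩ := Prod.ext_iff.1 heq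
  simp only [logPolar] at h₁ h₂
  -- the radius is recovered as `x² + y² = e^{2s}`
  have hsq : exp s ^ 2 = exp t ^ 2 := by
    linear_combination (exp s * sin φ + exp t * sin ψ) * h₁ + (exp s * cos φ + exp t * cos ψ) * h₂
      + exp t ^ 2 * sin_sq_add_cos_sq ψ - exp s ^ 2 * sin_sq_add_cos_sq φ
  have hst : exp s = exp t := (pow_left_inj₀ (exp_pos s).le (exp_pos t).le two_ne_zero).1 hsq
  rw [hst] at h₁
  exact Prod.ext (exp_injective hst) (injOn_sin hφ hψ (mul_left_cancel₀ (exp_ne_zero t) h₁))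

/-- The log-polar chart carries the hyperbolic area element `dx dy / y²` to `dφ ds / cos² φ`. -/
theorem abs_det_mul_hypDensity_logPolar (p : ℝ × ℝ) :
    |(logPolarDeriv p).det| * (1 / (logPolar p).2 ^ 2) = 1 / cos p.2 ^ 2 := by
  rw [det_logPolarDeriv, abs_neg, abs_of_pos (exp_pos _), logPolar, two_mul, exp_add, ← sq,
    mul_pow, one_div, one_div, mul_inv, ← mul_assoc, mul_inv_cancel₀ (pow_ne_zero 2 (exp_ne_zero _)),
    one_mul]

theorem lintegral_Icc_one_div_cos_sq {a : ℝ} (ha₀ : 0 ≤ a) (ha : a < π / 2) :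
    ∫⁻ φ in Icc 0 a, ENNReal.ofReal (1 / cos φ ^ 2) = ENNReal.ofReal (tan a) := by
  have hcos : ∀ φ ∈ Icc 0 a, cos φ ≠ 0 := fun φ hφ =>
    (cos_pos_of_mem_Ioo ⟨by linarith [pi_pos, hφ.1], hφ.2.trans_lt ha⟩).ne'
  have hcont : ContinuousOn (fun φ => 1 / cos φ ^ 2) (Icc 0 a) :=
    continuousOn_const.div (continuous_cos.continuousOn.pow 2) fun φ hφ => pow_ne_zero 2 (hcos φ hφ)
  rw [← ofReal_integral_eq_lintegral_ofReal (hcont.integrableOn_compact isCompact_Icc)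
      (ae_of_all _ fun φ => by positivity),
    integral_Icc_eq_integral_Ioc, ← intervalIntegral.integral_of_le ha₀,
    intervalIntegral.integral_eq_sub_of_hasDerivAt (f := tan), tan_zero, sub_zero]
  · rw [uIcc_of_le ha₀]
    exact fun φ hφ => hasDerivAt_tan (hcos φ hφ)
  · exact hcont.intervalIntegrable_of_Icc ha₀

theorem hypArea_logPolar_image_prod {E : Set ℝ} (hE : MeasurableSet E) {a : ℝ} (ha₀ : 0 ≤ a)
    (ha : a < π / 2) :
    hypArea (logPolar '' (E ×ˢ Icc 0 a)) = volume E * ENNReal.ofReal (tan a) := by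
  have hinj : InjOn logPolar (E ×ˢ Icc 0 a) := injOn_logPolar.mono <|
    prod_mono (subset_univ E) (Icc_subset_Icc (by linarith [pi_pos]) ha.le)
  rw [hypArea, lintegral_image_eq_lintegral_abs_det_fderiv_mul volume (hE.prod measurableSet_Icc)
    (fun p _ => (hasFDerivAt_logPolar p).hasFDerivWithinAt) hinj]
  simp_rw [← ENNReal.ofReal_mul (abs_nonneg _), abs_det_mul_hypDensity_logPolar]
  rw [Measure.volume_eq_prod, setLIntegral_prod _ (by fun_prop)]
  simp_rw [lintegral_Icc_one_div_cos_sq ha₀ ha, setLIntegral_const, mul_comm]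

theorem perpendicular_arcs_area_bound_general (ε : ℝ) (hε : 0 ≤ ε)
    (A : Set (ℝ × ℝ))
    (E : Set ℝ) (hE : MeasurableSet E)
    (harc : ∀ s ∈ E, perpArc s ε ⊆ A) :
    volume E * ENNReal.ofReal (Real.sinh ε) ≤ hypArea A := by
  have hα : 0 ≤ arctan (sinh ε) := arctan_nonneg.2 (sinh_nonneg_iff.2 hε)
  have harcs : logPolar '' (E ×ˢ Icc 0 (arctan (sinh ε))) ⊆ A := by
    rintro _ ⟨⟨s, φ⟩, ⟨hs, hφ⟩, rfl⟩
    exact harc s hs ⟨φ, hφ, rfl⟩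
  calc volume E * ENNReal.ofReal (sinh ε)
      = hypArea (logPolar '' (E ×ˢ Icc 0 (arctan (sinh ε)))) := by
        rw [hypArea_logPolar_image_prod hE hα (arctan_lt_pi_div_two _), tan_arctan]
    _ ≤ hypArea A := lintegral_mono_set harcs

/-- if the perpendicular arcs of length `ε` over a measurable set `E` of
parameters of a boundary geodesic segment are pairwise disjoint and contained in the
hyperbolic surface `A`, then `length(E)·sinh(ε) ≤ Area(A)`. -/
theorem perpendicular_arcs_area_bound (L ε : ℝ) (hL : 0 ≤ L) (hε : 0 ≤ ε)
    (A : Set (ℝ × ℝ)) (hA : MeasurableSet A) (hA' : A ⊆ {p : ℝ × ℝ | 0 < p.2})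
    (E : Set ℝ) (hE : MeasurableSet E) (hEL : E ⊆ Icc 0 L)
    (harc : ∀ s ∈ E, perpArc s ε ⊆ A)
    (hdisj : ∀ s ∈ E, ∀ t ∈ E, s ≠ t → Disjoint (perpArc s ε) (perpArc t ε)) :
    volume E * ENNReal.ofReal (Real.sinh ε) ≤ hypArea A :=
  perpendicular_arcs_area_bound_general ε hε A E hE harc
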